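/- Let X = X₁ ⊕ ⋯ ⊕ Xₙ be a direct sum decomposition of the Hilbert 𝔄-module X whose submodules are pairwise orthogonal (⟨x,y⟩ = 0 for x ∈ Xᵢ, y ∈ Xⱼ, i ≠ j). Then the decomposition is orthogonal with respect to the Hilbert C*-multi-norm: for every xᵢ ∈ Xᵢ (1 ≤ i ≤ n) and every partition {S₁,…,S_m} of {1,…,n}, setting yⱼ = Σ_{i∈Sⱼ} xᵢ, one has ‖(y₁,…,y_m)‖^X_m = ‖(x₁,…,xₙ)‖^X_n; in particular ‖(x₁,…,xₙ)‖^X_n = ‖x₁ + ⋯ + xₙ‖. -/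

import Mathlib

open scoped RightActions

/-- The (right) Hilbert C*-module structure as `CStarModule` was defined in Mathlib of
December 2024 (right action of `Aᵐᵒᵖ`, `⟪x, y <• a⟫ = ⟪x, y⟫ * a`). -/
class CStarModuleRight (A : outParam <| Type*) (E : Type*) [NonUnitalSemiring A] [StarRing A]
    [Module ℂ A] [AddCommGroup E] [Module ℂ E] [PartialOrder A] [SMul Aᵐᵒᵖ E] [Norm A] [Norm E]
    extends Inner A E where
  inner_add_right {x} {y} {z} : inner x (y + z) = inner x y + inner x z
  inner_self_nonneg {x} : 0 ≤ inner x x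
  inner_self {x} : inner x x = 0 ↔ x = 0
  inner_op_smul_right {a : A} {x y : E} : inner x (y <• a) = inner x y * a
  inner_smul_right_complex {z : ℂ} {x} {y} : inner x (z • y) = z • inner x y
  star_inner x y : star (inner x y) = inner y x
  norm_eq_sqrt_norm_inner_self x : ‖x‖ = √‖inner x x‖

variable (A : Type*) {E : Type*} [NonUnitalCStarAlgebra A] [PartialOrder A] [StarOrderedRing A]
  [NormedAddCommGroup E] [Module ℂ E] [SMul Aᵐᵒᵖ E] [CStarModuleRight A E]

/-- A projection on the Hilbert `A`-module `E`: a bounded `A`-linear idempotent map which is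
self-adjoint with respect to the `A`-valued inner product. -/
def IsProjectionOp (P : E →L[ℂ] E) : Prop :=
  (∀ (a : A) (v : E), P (MulOpposite.op a • v) = MulOpposite.op a • P v) ∧
  (∀ v : E, P (P v) = P v) ∧
  (∀ v w : E, (inner A (P v) w : A) = inner A v (P w))

/-- The Hilbert C*-multi-norm `‖x‖^X_n`. -/
noncomputable def hilbertCStarMultiNorm (n : ℕ) (x : Fin n → E) : ℝ :=
  sSup {r : ℝ | ∃ P : Fin n → E →L[ℂ] E, (∀ i, IsProjectionOp A (P i)) ∧
    (∀ i j, i ≠ j → ∀ v, P i (P j v) = 0) ∧ (∀ v, ∑ i, P i v = v) ∧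
    r = ‖∑ i, P i (x i)‖}

section
variable {A}
namespace CStarModuleRight

lemma inner_zero_right' {x : E} : inner A x (0 : E) = 0 := by
  have h := CStarModuleRight.inner_add_right (A := A) (x := x) (y := (0 : E)) (z := 0)
  rw [add_zero] at h
  have h2 : inner A x (0 : E) + inner A x (0 : E) = inner A x (0 : E) + 0 := by
    rw [add_zero, ← h]
  exact add_left_cancel h2

lemma inner_neg_right' {x y : E} : inner A x (-y) = - inner A x y := by
  have h := CStarModuleRight.inner_add_right (A := A) (x := x) (y := y) (z := -y)
  rw [add_neg_cancel, CStarModuleRight.inner_zero_right'] at h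
  rw [eq_neg_iff_add_eq_zero, add_comm]
  exact h.symm

lemma inner_sub_right' {x y z : E} : inner A x (y - z) = inner A x y - inner A x z := by
  rw [sub_eq_add_neg, CStarModuleRight.inner_add_right, CStarModuleRight.inner_neg_right',
    ← sub_eq_add_neg]

lemma inner_add_left' {x y z : E} : inner A (x + y) z = inner A x z + inner A y z := by
  rw [← CStarModuleRight.star_inner z (x + y), CStarModuleRight.inner_add_right, star_add,
    CStarModuleRight.star_inner, CStarModuleRight.star_inner]

lemma inner_sub_left' {x y z : E} : inner A (x - y) z = inner A x z - inner A y z := by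
  rw [← CStarModuleRight.star_inner z (x - y), CStarModuleRight.inner_sub_right', star_sub,
    CStarModuleRight.star_inner, CStarModuleRight.star_inner]

lemma inner_sum_right' {ι : Type*} {s : Finset ι} {f : ι → E} {x : E} :
    inner A x (∑ i ∈ s, f i) = ∑ i ∈ s, inner A x (f i) := by
  induction s using Finset.cons_induction with
  | empty => simp only [Finset.sum_empty, CStarModuleRight.inner_zero_right']
  | cons i s hi ih => rw [Finset.sum_cons, Finset.sum_cons, CStarModuleRight.inner_add_right, ih]

lemma inner_sum_left' {ι : Type*} {s : Finset ι} {f : ι → E} {x : E} :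
    inner A (∑ i ∈ s, f i) x = ∑ i ∈ s, inner A (f i) x := by
  rw [← CStarModuleRight.star_inner x (∑ i ∈ s, f i), CStarModuleRight.inner_sum_right', star_sum]
  simp only [CStarModuleRight.star_inner]

end CStarModuleRight
end

lemma aux_inner_self_sum {n : ℕ} (u : Fin n → E)
    (h : ∀ i j, i ≠ j → (inner A (u i) (u j) : A) = 0) :
    (inner A (∑ i, u i) (∑ i, u i) : A) = ∑ i, (inner A (u i) (u i) : A) := by
  rw [CStarModuleRight.inner_sum_left']
  refine Finset.sum_congr rfl fun i _ => ?_
  rw [CStarModuleRight.inner_sum_right']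
  exact Finset.sum_eq_single i (fun j _ hj => h i j hj.symm) (fun hi => absurd (Finset.mem_univ i) hi)

lemma aux_proj_inner_le (P : E →L[ℂ] E) (hP : IsProjectionOp A P) (v : E) :
    (inner A (P v) (P v) : A) ≤ inner A v v := by
  have h1 : (inner A (P v) (P v) : A) = inner A v (P v) := by
    rw [hP.2.2 v (P v), hP.2.1]
  have h2 : (inner A (P v) v : A) = inner A v (P v) := hP.2.2 v v
  have h0 : (0 : A) ≤ inner A (v - P v) (v - P v) := CStarModuleRight.inner_self_nonneg
  have hexp : (inner A (v - P v) (v - P v) : A) = inner A v v - inner A (P v) (P v) := by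
    rw [CStarModuleRight.inner_sub_left', CStarModuleRight.inner_sub_right', CStarModuleRight.inner_sub_right',
      h1, h2]
    abel
  rw [hexp] at h0
  exact sub_nonneg.mp h0

lemma aux_norm_le (u w : E) (h : (inner A u u : A) ≤ inner A w w) : ‖u‖ ≤ ‖w‖ := by
  rw [CStarModuleRight.norm_eq_sqrt_norm_inner_self (A := A) u,
    CStarModuleRight.norm_eq_sqrt_norm_inner_self (A := A) w]
  exact Real.sqrt_le_sqrt
    (CStarAlgebra.norm_le_norm_of_nonneg_of_le CStarModuleRight.inner_self_nonneg h)

lemma aux_upper {n : ℕ} (x : Fin n → E) (hxo : ∀ i j, i ≠ j → (inner A (x i) (x j) : A) = 0)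
    (P : Fin n → E →L[ℂ] E) (hP : ∀ i, IsProjectionOp A (P i))
    (hPo : ∀ i j, i ≠ j → ∀ v, P i (P j v) = 0) :
    ‖∑ i, P i (x i)‖ ≤ ‖∑ i, x i‖ := by
  apply aux_norm_le A
  have horthu : ∀ i j, i ≠ j → (inner A (P i (x i)) (P j (x j)) : A) = 0 := by
    intro i j hij
    rw [(hP i).2.2, hPo i j hij, CStarModuleRight.inner_zero_right']
  rw [aux_inner_self_sum A _ horthu, aux_inner_self_sum A x hxo]
  exact Finset.sum_le_sum fun i _ => aux_proj_inner_le A (P i) (hP i) (x i)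


lemma aux_op_smul_add (a : A) (u w : E) :
    MulOpposite.op a • (u + w) = MulOpposite.op a • u + MulOpposite.op a • w := by
  have h : (inner A (MulOpposite.op a • (u + w) - (MulOpposite.op a • u + MulOpposite.op a • w))
      (MulOpposite.op a • (u + w) - (MulOpposite.op a • u + MulOpposite.op a • w)) : A) = 0 := by
    rw [CStarModuleRight.inner_sub_right', CStarModuleRight.inner_op_smul_right,
      CStarModuleRight.inner_add_right, CStarModuleRight.inner_add_right,
      CStarModuleRight.inner_op_smul_right, CStarModuleRight.inner_op_smul_right, add_mul, sub_self]
  exact sub_eq_zero.mp (CStarModuleRight.inner_self.mp h)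

lemma aux_op_smul_zero (a : A) : MulOpposite.op a • (0 : E) = 0 := by
  have h : (inner A (MulOpposite.op a • (0 : E) - 0) (MulOpposite.op a • (0 : E) - 0) : A) = 0 := by
    rw [CStarModuleRight.inner_sub_right', CStarModuleRight.inner_op_smul_right,
      CStarModuleRight.inner_zero_right']
    simp
  exact sub_eq_zero.mp (CStarModuleRight.inner_self.mp h)

lemma aux_op_smul_sum (a : A) {I : Type*} (s : Finset I) (f : I → E) :
    MulOpposite.op a • (∑ i ∈ s, f i) = ∑ i ∈ s, MulOpposite.op a • f i := by
  induction s using Finset.cons_induction with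
  | empty => simpa using aux_op_smul_zero A (E := E) a
  | cons i s hi ih => rw [Finset.sum_cons, Finset.sum_cons, aux_op_smul_add A a, ih]

lemma aux_eq {n : ℕ} (x : Fin n → E)
    (hxo : ∀ i j, i ≠ j → (inner A (x i) (x j) : A) = 0)
    (hmem : ∃ P : Fin n → E →L[ℂ] E, (∀ i, IsProjectionOp A (P i)) ∧
      (∀ i j, i ≠ j → ∀ v, P i (P j v) = 0) ∧ (∀ v, ∑ i, P i v = v) ∧
      ∑ i, P i (x i) = ∑ i, x i) :
    hilbertCStarMultiNorm A n x = ‖∑ i, x i‖ := by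
  obtain ⟨P, h1, h2, h3, h4⟩ := hmem
  have hmem' : ‖∑ i, x i‖ ∈ {r : ℝ | ∃ P : Fin n → E →L[ℂ] E,
      (∀ i, IsProjectionOp A (P i)) ∧ (∀ i j, i ≠ j → ∀ v, P i (P j v) = 0) ∧
      (∀ v, ∑ i, P i v = v) ∧ r = ‖∑ i, P i (x i)‖} :=
    ⟨P, h1, h2, h3, by rw [h4]⟩
  have hub : ∀ r ∈ {r : ℝ | ∃ P : Fin n → E →L[ℂ] E,
      (∀ i, IsProjectionOp A (P i)) ∧ (∀ i j, i ≠ j → ∀ v, P i (P j v) = 0) ∧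
      (∀ v, ∑ i, P i v = v) ∧ r = ‖∑ i, P i (x i)‖}, r ≤ ‖∑ i, x i‖ := by
    rintro r ⟨Q, hQ1, hQ2, hQ3, rfl⟩
    exact aux_upper A x hxo Q hQ1 hQ2
  exact le_antisymm (csSup_le ⟨_, hmem'⟩ hub) (le_csSup ⟨_, hub⟩ hmem')

lemma aux_proj_exists (n : ℕ) (Y : Fin n → Submodule ℂ E)
    (hsmul : ∀ i, ∀ (a : A), ∀ y ∈ Y i, MulOpposite.op a • y ∈ Y i)
    (hcompl : ∀ i, ∀ v : E, ∃ y z : E, y ∈ Y i ∧ v = y + z ∧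
      ∀ y' ∈ Y i, (inner A y' z : A) = 0)
    (huniq : ∀ v : E, ∃! f : Fin n → E, (∀ i, f i ∈ Y i) ∧ ∑ i, f i = v)
    (horth : ∀ i j, i ≠ j → ∀ x ∈ Y i, ∀ y ∈ Y j, (inner A x y : A) = 0) :
    ∃ P : Fin n → E →L[ℂ] E, (∀ i, IsProjectionOp A (P i)) ∧
      (∀ i j, i ≠ j → ∀ v, P i (P j v) = 0) ∧ (∀ v, ∑ i, P i v = v) ∧
      (∀ i, ∀ w ∈ Y i, P i w = w) ∧ (∀ i j, i ≠ j → ∀ w ∈ Y j, P i w = 0) := by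
  choose p z hpY hsplit hzorth using hcompl
  have hz : ∀ i v, z i v = v - p i v := by
    intro i v
    rw [eq_sub_iff_add_eq, add_comm]
    exact (hsplit i v).symm
  -- uniqueness of the orthogonal decomposition
  have huniqp : ∀ i (v y : E), y ∈ Y i → (∀ y' ∈ Y i, (inner A y' (v - y) : A) = 0) →
      p i v = y := by
    intro i v y hy hperp
    have hd : p i v - y ∈ Y i := Submodule.sub_mem _ (hpY i v) hy
    have e : v - y - z i v = p i v - y := by rw [hz]; abel
    have h3 : (inner A (p i v - y) (v - y - z i v) : A) = 0 := by
      rw [CStarModuleRight.inner_sub_right', hperp _ hd, hzorth i v _ hd, sub_zero]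
    rw [e] at h3
    exact sub_eq_zero.mp (CStarModuleRight.inner_self.mp h3)
  have hadd : ∀ i (v w : E), p i (v + w) = p i v + p i w := by
    intro i v w
    refine huniqp i _ _ (Submodule.add_mem _ (hpY i v) (hpY i w)) fun y' hy' => ?_
    have e : v + w - (p i v + p i w) = (v - p i v) + (w - p i w) := by abel
    rw [e, CStarModuleRight.inner_add_right, ← hz, ← hz, hzorth i v _ hy', hzorth i w _ hy',
      add_zero]
  have hsmulC : ∀ i (c : ℂ) (v : E), p i (c • v) = c • p i v := by
    intro i c v
    refine huniqp i _ _ (Submodule.smul_mem _ c (hpY i v)) fun y' hy' => ?_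
    have e : c • v - c • p i v = c • (v - p i v) := (smul_sub c v (p i v)).symm
    rw [e, ← hz, CStarModuleRight.inner_smul_right_complex, hzorth i v _ hy', smul_zero]
  have hnorm : ∀ i (v : E), ‖p i v‖ ≤ ‖v‖ := by
    intro i v
    apply aux_norm_le (A := A)
    have h2 : (inner A (p i v) (z i v) : A) = 0 := hzorth i v _ (hpY i v)
    have h2' : (inner A (z i v) (p i v) : A) = 0 := by
      rw [← CStarModuleRight.star_inner, h2, star_zero]
    have hvv : (inner A v v : A) = inner A (p i v) (p i v) + inner A (z i v) (z i v) := by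
      conv_lhs => rw [hsplit i v]
      rw [CStarModuleRight.inner_add_left', CStarModuleRight.inner_add_right,
        CStarModuleRight.inner_add_right, h2, h2']
      abel
    rw [hvv]
    exact le_add_of_nonneg_right CStarModuleRight.inner_self_nonneg
  set P : Fin n → E →L[ℂ] E := fun i => LinearMap.mkContinuous
    { toFun := p i, map_add' := hadd i, map_smul' := fun c v => hsmulC i c v } 1
    (fun v => by simpa using hnorm i v) with hPdef
  have hPapp : ∀ i (v : E), P i v = p i v := fun i v => rfl
  have hfix : ∀ i, ∀ w ∈ Y i, p i w = w := by
    intro i w hw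
    exact huniqp i w w hw (fun y' _ => by simp [CStarModuleRight.inner_zero_right'])
  have hkill : ∀ i j, i ≠ j → ∀ w ∈ Y j, p i w = 0 := by
    intro i j hij w hw
    refine huniqp i w 0 (Submodule.zero_mem _) fun y' hy' => ?_
    rw [sub_zero]
    exact horth i j hij y' hy' w hw
  have hPsum : ∀ v : E, ∑ i, P i v = v := by
    intro v
    obtain ⟨f, ⟨hfY, hfsum⟩, -⟩ := huniq v
    have hpv : ∀ i, p i v = f i := by
      intro i
      refine huniqp i v (f i) (hfY i) fun y' hy' => ?_
      have e : v - f i = ∑ j ∈ Finset.univ.erase i, f j := by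
        rw [Finset.sum_erase_eq_sub (Finset.mem_univ i), hfsum]
      rw [e, CStarModuleRight.inner_sum_right']
      refine Finset.sum_eq_zero fun j hj => ?_
      exact horth i j (Finset.ne_of_mem_erase hj).symm y' hy' (f j) (hfY j)
    calc ∑ i, P i v = ∑ i, f i := by
          refine Finset.sum_congr rfl fun i _ => ?_
          rw [hPapp, hpv]
      _ = v := hfsum
  refine ⟨P, fun i => ⟨?_, ?_, ?_⟩, ?_, hPsum, ?_, ?_⟩
  · -- A-linearity
    intro a v
    simp only [hPapp]
    refine huniqp i _ _ (hsmul i a _ (hpY i v)) fun y' hy' => ?_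
    have h1 : (inner A y' v : A) = inner A y' (p i v) := by
      conv_lhs => rw [hsplit i v]
      rw [CStarModuleRight.inner_add_right, hzorth i v _ hy', add_zero]
    rw [CStarModuleRight.inner_sub_right', CStarModuleRight.inner_op_smul_right,
      CStarModuleRight.inner_op_smul_right, h1, sub_self]
  · -- idempotent
    intro v
    simp only [hPapp]
    exact hfix i _ (hpY i v)
  · -- self-adjoint
    intro v w
    simp only [hPapp]
    have hiv : (inner A (p i v) w : A) = inner A (p i v) (p i w) := by
      conv_lhs => rw [hsplit i w]
      rw [CStarModuleRight.inner_add_right, hzorth i w _ (hpY i v), add_zero]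
    have hiw : (inner A v (p i w) : A) = inner A (p i v) (p i w) := by
      conv_lhs => rw [hsplit i v]
      have : (inner A (z i v) (p i w) : A) = 0 := by
        rw [← CStarModuleRight.star_inner, hzorth i v _ (hpY i w), star_zero]
      rw [CStarModuleRight.inner_add_left', this, add_zero]
    rw [hiv, hiw]
  · -- mutual orthogonality
    intro i j hij v
    simp only [hPapp]
    exact hkill i j hij (p j v) (hpY j v)
  · -- fixes Y i
    intro i w hw
    simp only [hPapp]
    exact hfix i w hw
  · -- kills Y j
    intro i j hij w hw
    simp only [hPapp]
    exact hkill i j hij w hw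


/-- A direct sum decomposition of a Hilbert C*-module into pairwise orthogonal closed
submodules is orthogonal with respect to the Hilbert C*-multi-norm: for `xᵢ ∈ Xᵢ` and any
partition `{S₁,…,S_m}` of `{1,…,n}`, with `yⱼ = Σ_{i∈Sⱼ} xᵢ`, one has `‖y‖^X_m = ‖x‖^X_n`;
in particular `‖x‖^X_n = ‖x₁ + ⋯ + xₙ‖`. -/
theorem decomposition_orthogonal_hilbertCStarMultiNorm [CompleteSpace E]
    (n : ℕ) (Y : Fin n → Submodule ℂ E)
    (hclosed : ∀ i, IsClosed (Y i : Set E))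
    (hsmul : ∀ i, ∀ (a : A), ∀ y ∈ Y i, MulOpposite.op a • y ∈ Y i)
    (hcompl : ∀ i, ∀ v : E, ∃ y z : E, y ∈ Y i ∧ v = y + z ∧
      ∀ y' ∈ Y i, (inner A y' z : A) = 0)
    (huniq : ∀ v : E, ∃! f : Fin n → E, (∀ i, f i ∈ Y i) ∧ ∑ i, f i = v)
    (horth : ∀ i j, i ≠ j → ∀ x ∈ Y i, ∀ y ∈ Y j, (inner A x y : A) = 0)
    (x : Fin n → E) (hx : ∀ i, x i ∈ Y i) :
    (∀ (m : ℕ) (S : Fin m → Finset (Fin n)), (∀ i, ∃! j, i ∈ S j) →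
      hilbertCStarMultiNorm A m (fun j => ∑ i ∈ S j, x i) = hilbertCStarMultiNorm A n x) ∧
    hilbertCStarMultiNorm A n x = ‖∑ i, x i‖ := by
  obtain ⟨P, hPproj, hPorth, hPsum, hPfix, hPkill⟩ :=
    aux_proj_exists A n Y hsmul hcompl huniq horth
  have hxo : ∀ i j, i ≠ j → (inner A (x i) (x j) : A) = 0 :=
    fun i j h => horth i j h _ (hx i) _ (hx j)
  have hPx : ∑ i, P i (x i) = ∑ i, x i :=
    Finset.sum_congr rfl fun i _ => hPfix i _ (hx i)
  have hmain : hilbertCStarMultiNorm A n x = ‖∑ i, x i‖ :=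
    aux_eq A x hxo ⟨P, hPproj, hPorth, hPsum, hPx⟩
  refine ⟨?_, hmain⟩
  intro m S hpart
  have hpart' : ∀ i, ∃ j, i ∈ S j ∧ ∀ k, i ∈ S k → k = j := hpart
  choose t ht1 ht2 using hpart'
  have hSfilter : ∀ j, S j = Finset.univ.filter (fun i => t i = j) := by
    intro j
    ext i
    simp only [Finset.mem_filter, Finset.mem_univ, true_and]
    exact ⟨fun h => (ht2 i j h).symm, fun h => by rw [← h]; exact ht1 i⟩
  have hdisj : ∀ {j j' : Fin m} {i i' : Fin n}, j ≠ j' → i ∈ S j → i' ∈ S j' → i ≠ i' := by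
    intro j j' i i' hjj' hi hi' h
    subst h
    exact hjj' ((ht2 i j hi).trans (ht2 i j' hi').symm)
  have hyo : ∀ j j', j ≠ j' →
      (inner A (∑ i ∈ S j, x i) (∑ i ∈ S j', x i) : A) = 0 := by
    intro j j' hjj'
    rw [CStarModuleRight.inner_sum_left']
    refine Finset.sum_eq_zero fun i hi => ?_
    rw [CStarModuleRight.inner_sum_right']
    exact Finset.sum_eq_zero fun i' hi' =>
      horth i i' (hdisj hjj' hi hi') _ (hx i) _ (hx i')
  set Q : Fin m → E →L[ℂ] E := fun j => ∑ i ∈ S j, P i with hQ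
  have hQapp : ∀ j (v : E), Q j v = ∑ i ∈ S j, P i v := by
    intro j v
    simp [hQ]
  have hQproj : ∀ j, IsProjectionOp A (Q j) := by
    intro j
    refine ⟨?_, ?_, ?_⟩
    · intro a v
      simp only [hQapp]
      rw [aux_op_smul_sum]
      exact Finset.sum_congr rfl fun i _ => (hPproj i).1 a v
    · intro v
      simp only [hQapp]
      refine Finset.sum_congr rfl fun i hi => ?_
      rw [map_sum, Finset.sum_eq_single_of_mem i hi
        (fun i' _ h => hPorth i i' h.symm v)]
      exact (hPproj i).2.1 v
    · intro v w
      simp only [hQapp]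
      rw [CStarModuleRight.inner_sum_left', CStarModuleRight.inner_sum_right']
      exact Finset.sum_congr rfl fun i _ => (hPproj i).2.2 v w
  have hQorth : ∀ j j', j ≠ j' → ∀ v, Q j (Q j' v) = 0 := by
    intro j j' hjj' v
    simp only [hQapp]
    refine Finset.sum_eq_zero fun i hi => ?_
    rw [map_sum]
    exact Finset.sum_eq_zero fun i' hi' => hPorth i i' (hdisj hjj' hi hi') v
  have hQsum : ∀ v : E, ∑ j, Q j v = v := by
    intro v
    calc ∑ j, Q j v = ∑ j, ∑ i ∈ Finset.univ.filter (fun i => t i = j), P i v := by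
          refine Finset.sum_congr rfl fun j _ => ?_
          rw [hQapp, hSfilter]
      _ = ∑ i, P i v := Finset.sum_fiberwise _ _ _
      _ = v := hPsum v
  have hQy : ∑ j, Q j (∑ i ∈ S j, x i) = ∑ j, ∑ i ∈ S j, x i := by
    refine Finset.sum_congr rfl fun j _ => ?_
    rw [hQapp]
    refine Finset.sum_congr rfl fun i hi => ?_
    rw [map_sum, Finset.sum_eq_single_of_mem i hi
      (fun i' _ h => hPkill i i' h.symm (x i') (hx i'))]
    exact hPfix i (x i) (hx i)
  have hsumy : ∑ j, ∑ i ∈ S j, x i = ∑ i, x i := by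
    calc ∑ j, ∑ i ∈ S j, x i
        = ∑ j, ∑ i ∈ Finset.univ.filter (fun i => t i = j), x i := by
          refine Finset.sum_congr rfl fun j _ => ?_
          rw [hSfilter]
      _ = ∑ i, x i := Finset.sum_fiberwise _ _ _
  have heq : hilbertCStarMultiNorm A m (fun j => ∑ i ∈ S j, x i)
      = ‖∑ j, ∑ i ∈ S j, x i‖ :=
    aux_eq A (fun j => ∑ i ∈ S j, x i) hyo ⟨Q, hQproj, hQorth, hQsum, by rw [hQy]⟩
  rw [heq, hmain, hsumy]
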